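/- arXiv:1108.5095 — 3 statements merged into one kernel-verified Lean document; each statement's English description precedes it below -/
import Mathlib

section
/- For every decreasing sequence α = (l_0, l_1, …, l_r) of numbers from {0,…,k}, the minimum of Y^k_α equals Σ_{i=0}^r ⌊2^{l_i − 1}⌋. -/
/-!
Every `Y^k_α` is an interval `[m, m + c)`. Appending a level `l` keeps the slots whose offset
`d = y − m` satisfies `⌈log₂(d + 1)⌉ = l`, i.e. `⌊2^{l−1}⌋ ≤ d < 2^l`; this block lies inside
`[m, m + c)` because the levels decrease strictly, so the previous width `c` is at least `2^l`.
Hence the left end moves by exactly `⌊2^{l−1}⌋` at each step.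
-/

/-- The `k`-bit reversal permutation of `{0,…,2^k−1}`. -/
def revBits (k x : ℕ) : ℕ := ∑ i ∈ Finset.range k, 2 ^ i * (x / 2 ^ (k - 1 - i) % 2)

/-- The sets of time slots `Y^k_α`.  A (decreasing) sequence `α = (l_0,…,l_r)` of the paper
is represented here as the list `[l_r, …, l_0]`, with the most recently appended level first:
`Y^k_{()} = {0,…,2^k−1}` and `Y^k_{α·(l)} = {y ∈ Y^k_α : ⌈log₂(y − min Y^k_α + 1)⌉ = l}`. -/
noncomputable def Y (k : ℕ) : List ℕ → Finset ℕ
  | [] => Finset.range (2 ^ k)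
  | l :: α => (Y k α).filter (fun y => Nat.clog 2 (y - sInf {z : ℕ | z ∈ Y k α} + 1) = l)

/-- Validity of the (reversed) sequence: the paper's `α` is strictly decreasing with
entries in `{0,…,k}`, i.e. the reversed list is strictly increasing with entries `≤ k`. -/
def ValidSeq (k : ℕ) (α : List ℕ) : Prop :=
  List.Pairwise (· < ·) α ∧ ∀ l ∈ α, l ≤ k

/-- The ranks `X^k_α = revBits_k(Y^k_α)`. -/
noncomputable def X (k : ℕ) (α : List ℕ) : Finset ℕ := (Y k α).image (revBits k)

/-- `step^k_{()} = 1` and `step^k_{α·(l)} = 2^{k−l+1}`. -/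
def stepA (k : ℕ) : List ℕ → ℕ
  | [] => 1
  | l :: _ => 2 ^ (k - l + 1)

lemma Nat.clog_two_succ_eq_iff (d l : ℕ) :
    Nat.clog 2 (d + 1) = l ↔ 2 ^ l / 2 ≤ d ∧ d < 2 ^ l := by
  have hle := Nat.clog_le_iff_le_pow one_lt_two (x := d + 1) (y := l)
  cases l with
  | zero => simp only [pow_zero] at hle ⊢; omega
  | succ j =>
    have hgt := Nat.lt_clog_iff_pow_lt one_lt_two (x := d + 1) (y := j)
    have hdiv : 2 ^ (j + 1) / 2 = 2 ^ j := by rw [pow_succ, Nat.mul_div_cancel _ two_pos]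
    omega

lemma Finset.filter_clog_Ico_eq_Ico {m n : ℕ} (l : ℕ) (h : m + 2 ^ l ≤ n) :
    (Finset.Ico m n).filter (fun y => Nat.clog 2 (y - m + 1) = l)
      = Finset.Ico (m + 2 ^ l / 2) (m + 2 ^ l) := by
  ext y
  simp only [Finset.mem_filter, Finset.mem_Ico, Nat.clog_two_succ_eq_iff]
  omega

lemma sInf_setOf_mem_Ico {a b : ℕ} (h : a < b) : sInf {y : ℕ | y ∈ Finset.Ico a b} = a := by
  change sInf (↑(Finset.Ico a b) : Set ℕ) = a
  rw [Finset.coe_Ico]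
  exact csInf_Ico h

def slotCount (k : ℕ) : List ℕ → ℕ
  | [] => 2 ^ k
  | l :: _ => 2 ^ l - 2 ^ l / 2

lemma slotCount_pos (k : ℕ) (α : List ℕ) : 0 < slotCount k α := by
  cases α with
  | nil => exact Nat.two_pow_pos k
  | cons l _ => exact Nat.sub_pos_of_lt (Nat.div_lt_self (Nat.two_pow_pos l) one_lt_two)

lemma pow_le_slotCount {k l : ℕ} {α : List ℕ} (h : ValidSeq k (l :: α)) :
    2 ^ l ≤ slotCount k α := by
  cases α with
  | nil => exact Nat.pow_le_pow_right two_pos (h.2 l List.mem_cons_self)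
  | cons l' _ =>
    have hll' : l < l' := (List.pairwise_cons.mp h.1).1 l' List.mem_cons_self
    have : 2 ^ l * 2 ≤ 2 ^ l' := by
      rw [← pow_succ]; exact Nat.pow_le_pow_right two_pos hll'
    simp only [slotCount]
    omega

lemma ValidSeq.tail {k l : ℕ} {α : List ℕ} (h : ValidSeq k (l :: α)) : ValidSeq k α :=
  ⟨(List.pairwise_cons.mp h.1).2, fun x hx => h.2 x (List.mem_cons_of_mem l hx)⟩

theorem Y_eq_Ico (k : ℕ) {α : List ℕ} (h : ValidSeq k α) :
    Y k α = Finset.Ico (α.map (fun l => 2 ^ l / 2)).sum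
      ((α.map (fun l => 2 ^ l / 2)).sum + slotCount k α) := by
  induction α with
  | nil => rw [Y, slotCount, Finset.range_eq_Ico]; simp
  | cons l α ih =>
    have hcount := pow_le_slotCount h
    rw [Y, ih h.tail, sInf_setOf_mem_Ico (Nat.lt_add_of_pos_right (slotCount_pos k α)),
      Finset.filter_clog_Ico_eq_Ico l (by omega)]
    simp only [List.map_cons, List.sum_cons, slotCount]
    rw [Nat.add_comm (2 ^ l / 2), Nat.add_assoc, Nat.add_sub_cancel' (Nat.div_le_self _ _)]

/-- `min Y^k_{(l_0,…,l_r)} = ∑_i ⌊2^{l_i−1}⌋`. -/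
theorem Y_min (k : ℕ) (α : List ℕ) (h : ValidSeq k α) :
    sInf {y : ℕ | y ∈ Y k α} = (α.map (fun l => 2 ^ l / 2)).sum := by
  rw [Y_eq_Ico k h]
  exact sInf_setOf_mem_Ico (Nat.lt_add_of_pos_right (slotCount_pos k α))
end

section
/- For l > 0 and a decreasing sequence α, x ∈ X^k_{α·(l)} if and only if x − 2^{k−l} ∈ ⋃_{i=0}^{l−1} X^k_{α·(i)}; i.e., the ranks of level l are obtained by shifting the union of the ranks of all previous levels by half a step. -/
/-!
For a valid sequence `l :: α`, the set `Y^k_α` is an aligned dyadic block `[n, n + 2^e)` with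
`l ≤ e`. Level `l` cuts out of it the block `[n + 2^{l-1}, n + 2^l)`, while the levels `i < l`
together fill `[n, n + 2^{l-1})`. Bit reversal maps an aligned block `[n, n + 2^c)` onto the
progression `revBits n + 2^{k-c} · {0, …, 2^c - 1}`, and since `2^l ∣ n`, moving the start from
`n` to `n + 2^{l-1}` only sets bit `k - l` of the reversal, i.e. adds `2^{k-l}`.
-/

open Finset

lemma revBits_zero_right (k : ℕ) : revBits k 0 = 0 := by
  simp [revBits]

lemma revBits_succ (m x : ℕ) : revBits (m + 1) x = 2 ^ m * (x % 2) + revBits m (x / 2) := by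
  rw [revBits, sum_range_succ, add_comm, revBits]
  simp only [Nat.add_sub_cancel, Nat.sub_self, pow_zero, Nat.div_one]
  congr 1
  refine sum_congr rfl fun i hi => ?_
  rw [mem_range] at hi
  rw [Nat.div_div_eq_div_mul, ← pow_succ', show m - 1 - i + 1 = m - i by omega]

lemma revBits_lt (m x : ℕ) : revBits m x < 2 ^ m := by
  induction m generalizing x with
  | zero => simp [revBits]
  | succ m ih =>
    rw [revBits_succ, pow_succ]
    have := ih (x / 2)
    have : x % 2 ≤ 1 := Nat.le_of_lt_succ (Nat.mod_lt x two_pos)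
    nlinarith

lemma revBits_two_pow_mul_add {c k t : ℕ} (q : ℕ) (hc : c ≤ k) (ht : t < 2 ^ c) :
    revBits k (2 ^ c * q + t) = revBits (k - c) q + 2 ^ (k - c) * revBits c t := by
  induction c generalizing k t with
  | zero =>
    obtain rfl : t = 0 := by simpa using ht
    simp [revBits_zero_right]
  | succ c ih =>
    obtain ⟨k, rfl⟩ : ∃ k', k = k' + 1 := ⟨k - 1, by omega⟩
    have hdiv : (2 ^ (c + 1) * q + t) / 2 = 2 ^ c * q + t / 2 := by
      rw [pow_succ, mul_comm (2 ^ c) 2, mul_assoc]; omega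
    have hmod : (2 ^ (c + 1) * q + t) % 2 = t % 2 := by
      rw [pow_succ, mul_comm (2 ^ c) 2, mul_assoc, Nat.mul_add_mod]
    rw [revBits_succ, revBits_succ, hdiv, hmod, ih (by omega) (by rw [pow_succ] at ht; omega),
      show k + 1 - (c + 1) = k - c by omega]
    have : 2 ^ (k - c) * 2 ^ c = 2 ^ k := by rw [← pow_add]; congr 1; omega
    rw [mul_add, ← mul_assoc, this]
    ring

lemma revBits_add_of_dvd {c k n t : ℕ} (hc : c ≤ k) (hn : 2 ^ c ∣ n) (ht : t < 2 ^ c) :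
    revBits k (n + t) = revBits k n + 2 ^ (k - c) * revBits c t := by
  obtain ⟨q, rfl⟩ := hn
  have h0 := revBits_two_pow_mul_add q hc (Nat.two_pow_pos c)
  simp only [add_zero, revBits_zero_right, mul_zero] at h0
  rw [revBits_two_pow_mul_add q hc ht, h0]

lemma revBits_add_two_pow {c k n : ℕ} (hc : c < k) (hn : 2 ^ (c + 1) ∣ n) :
    revBits k (n + 2 ^ c) = revBits k n + 2 ^ (k - (c + 1)) := by
  obtain ⟨q, rfl⟩ := hn
  have hodd := revBits_two_pow_mul_add (2 * q + 1) hc.le (Nat.two_pow_pos c)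
  have heven := revBits_two_pow_mul_add q hc (Nat.two_pow_pos (c + 1))
  simp only [add_zero, revBits_zero_right, mul_zero] at hodd heven
  rw [show 2 ^ (c + 1) * q + 2 ^ c = 2 ^ c * (2 * q + 1) by ring, hodd, heven,
    show k - c = k - (c + 1) + 1 by omega, revBits_succ, show (2 * q + 1) / 2 = q by omega,
    show (2 * q + 1) % 2 = 1 by omega]
  ring

lemma revBits_revBits {m x : ℕ} (hx : x < 2 ^ m) : revBits m (revBits m x) = x := by
  induction m generalizing x with
  | zero => simp_all [revBits]
  | succ m ih =>
    rw [revBits_succ m x, revBits_two_pow_mul_add _ (by omega) (revBits_lt m _),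
      ih (by rw [pow_succ] at hx; omega), Nat.add_sub_cancel_left]
    simp only [revBits, range_one, sum_singleton]
    omega

lemma image_revBits_Ico {c k n : ℕ} (hc : c ≤ k) (hn : 2 ^ c ∣ n) :
    (Ico n (n + 2 ^ c)).image (revBits k) =
      (range (2 ^ c)).image (fun w => revBits k n + 2 ^ (k - c) * w) := by
  ext x
  simp only [mem_image, mem_Ico, mem_range]
  constructor
  · rintro ⟨y, ⟨hny, hy⟩, rfl⟩
    obtain ⟨t, rfl⟩ := Nat.exists_eq_add_of_le hny
    exact ⟨revBits c t, revBits_lt c t, (revBits_add_of_dvd hc hn (by omega)).symm⟩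
  · rintro ⟨w, hw, rfl⟩
    refine ⟨n + revBits c w, by have := revBits_lt c w; omega, ?_⟩
    rw [revBits_add_of_dvd hc hn (revBits_lt c w), revBits_revBits hw]

lemma clog_two_succ_le_iff {t c : ℕ} : Nat.clog 2 (t + 1) ≤ c ↔ t < 2 ^ c := by
  rw [Nat.clog_le_iff_le_pow one_lt_two]
  omega

lemma clog_two_succ_eq_succ_iff {t c : ℕ} :
    Nat.clog 2 (t + 1) = c + 1 ↔ 2 ^ c ≤ t ∧ t < 2 ^ (c + 1) := by
  have := @clog_two_succ_le_iff t c
  have := @clog_two_succ_le_iff t (c + 1)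
  omega

lemma mem_Y_cons_iff {k a n w : ℕ} {α : List ℕ} (hY : Y k α = Ico n (n + w)) (hw : 0 < w)
    {y : ℕ} : y ∈ Y k (a :: α) ↔ y ∈ Ico n (n + w) ∧ Nat.clog 2 (y - n + 1) = a := by
  have hinf : sInf {z : ℕ | z ∈ Y k α} = n := by
    have hIco : {z : ℕ | z ∈ Ico n (n + w)} = Set.Ico n (n + w) := by ext; simp
    rw [hY, hIco, csInf_Ico (by omega)]
  rw [Y, mem_filter, hinf, hY]

lemma Y_cons_succ_eq_Ico {k c e n : ℕ} {α : List ℕ} (hY : Y k α = Ico n (n + 2 ^ e))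
    (hc : c < e) : Y k ((c + 1) :: α) = Ico (n + 2 ^ c) (n + 2 ^ (c + 1)) := by
  have : 2 ^ (c + 1) ≤ 2 ^ e := Nat.pow_le_pow_right two_pos hc
  ext y
  rw [mem_Y_cons_iff hY (Nat.two_pow_pos e), clog_two_succ_eq_succ_iff]
  simp only [mem_Ico]
  omega

lemma biUnion_Y_cons_eq_Ico {k c e n : ℕ} {α : List ℕ} (hY : Y k α = Ico n (n + 2 ^ e))
    (hc : c < e) : (range (c + 1)).biUnion (fun i => Y k (i :: α)) = Ico n (n + 2 ^ c) := by
  have : 2 ^ c ≤ 2 ^ e := Nat.pow_le_pow_right two_pos hc.le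
  ext y
  simp only [mem_biUnion, mem_range, mem_Y_cons_iff hY (Nat.two_pow_pos e), mem_Ico]
  constructor
  · rintro ⟨i, hi, hy, rfl⟩
    have := clog_two_succ_le_iff.mp (Nat.lt_succ_iff.mp hi)
    omega
  · intro hy
    exact ⟨_, Nat.lt_succ_iff.mpr (clog_two_succ_le_iff.mpr (by omega)), ⟨hy.1, by omega⟩, rfl⟩

lemma exists_Y_eq_Ico {k l : ℕ} {α : List ℕ} (h : ValidSeq k (l :: α)) :
    ∃ e m, l ≤ e ∧ Y k α = Ico (2 ^ e * m) (2 ^ e * m + 2 ^ e) := by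
  induction α generalizing l with
  | nil =>
    refine ⟨k, 0, h.2 l List.mem_cons_self, ?_⟩
    rw [Y, range_eq_Ico, mul_zero, zero_add]
  | cons a α ih =>
    have hla : l < a := List.rel_of_pairwise_cons h.1 List.mem_cons_self
    have htail : ValidSeq k (a :: α) :=
      ⟨h.1.of_cons, fun b hb => h.2 b (List.mem_cons_of_mem _ hb)⟩
    obtain ⟨e, m, hae, hY⟩ := ih htail
    obtain ⟨c, rfl⟩ : ∃ c, a = c + 1 := ⟨a - 1, by omega⟩
    refine ⟨c, 2 ^ (e - c) * m + 1, by omega, ?_⟩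
    have he : 2 ^ c * 2 ^ (e - c) = 2 ^ e := by rw [← pow_add]; congr 1; omega
    rw [Y_cons_succ_eq_Ico hY (by omega)]
    congr 1 <;> rw [← he] <;> ring

/-- For `l > 0`: `x ∈ X^k_{α·(l)}` iff `x − 2^{k−l}` belongs to the union of the
previous levels `⋃_{i<l} X^k_{α·(i)}`. -/
theorem X_level_shift (k : ℕ) (α : List ℕ) (l : ℕ) (h : ValidSeq k (l :: α)) (hl : 0 < l)
    (x : ℕ) :
    x ∈ X k (l :: α) ↔
      ∃ y ∈ (Finset.range l).biUnion (fun i => X k (i :: α)), (x : ℤ) - 2 ^ (k - l) = y := by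
  obtain ⟨e, m, hle, hY⟩ := exists_Y_eq_Ico h
  obtain ⟨c, rfl⟩ : ∃ c, l = c + 1 := ⟨l - 1, by omega⟩
  have hck : c < k := h.2 _ List.mem_cons_self
  set n := 2 ^ e * m
  have hdvd : 2 ^ (c + 1) ∣ n := (pow_dvd_pow 2 hle).mul_right m
  have hdvd' : 2 ^ c ∣ n := (pow_dvd_pow 2 c.le_succ).trans hdvd
  have hX : X k ((c + 1) :: α) =
      (range (2 ^ c)).image (fun w => revBits k n + 2 ^ (k - (c + 1)) + 2 ^ (k - c) * w) := by
    rw [X, Y_cons_succ_eq_Ico hY hle, pow_succ, mul_two, ← add_assoc, image_revBits_Ico hck.le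
      (hdvd'.add dvd_rfl), revBits_add_two_pow hck hdvd]
  have hU : (range (c + 1)).biUnion (fun i => X k (i :: α)) =
      (range (2 ^ c)).image (fun w => revBits k n + 2 ^ (k - c) * w) := by
    simp only [X, ← biUnion_image]
    rw [biUnion_Y_cons_eq_Ico hY hle, image_revBits_Ico hck.le hdvd']
  rw [hX, hU]
  simp only [mem_image, exists_exists_and_eq_and]
  refine exists_congr fun w => and_congr_right fun _ => ?_
  constructor
  · rintro rfl; push_cast; ring
  · intro hw
    push_cast at hw
    zify
    linarith
end

section
/- For every decreasing sequence α and every l ≥ 0, minStep(⋃_{i=0}^{l} X^k_{α·(i)}) ≥ 2^{k−l}. -/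
/-!
`Y^k_α` is always an aligned dyadic interval `[m, m + 2^e)` with `2^e ∣ m`, and the first `l + 1`
levels below it lie in the aligned subinterval `[m, m + 2^s)`, `s = min l e`. All its points agree
with `m` above bit `s`, and bit reversal turns the bits above `s` into the lowest `k - s` bits.
Hence the ranks of these points are congruent modulo `2^(k-s)`, a multiple of `2^(k-l)`.
-/

lemma clog_two_add_one_eq_iff (n h : ℕ) :
    Nat.clog 2 (n + 1) = h ↔ 2 ^ h / 2 ≤ n ∧ n < 2 ^ h := by
  rcases h with _ | h
  · rw [← Nat.le_zero, Nat.clog_le_iff_le_pow one_lt_two]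
    simp
  · have hle := Nat.clog_le_iff_le_pow one_lt_two (x := n + 1) (y := h + 1)
    have hlt := Nat.lt_clog_iff_pow_lt one_lt_two (x := n + 1) (y := h)
    rw [pow_succ, Nat.mul_div_cancel _ two_pos]
    rw [pow_succ] at hle
    omega

lemma div_eq_of_dvd_of_mem_Ico {d m y : ℕ} (hd : d ∣ m) (hy : y ∈ Finset.Ico m (m + d)) :
    y / d = m / d := by
  obtain ⟨q, rfl⟩ := hd
  rcases Nat.eq_zero_or_pos d with rfl | hpos
  · simp
  rw [Finset.mem_Ico] at hy
  rw [Nat.mul_div_cancel_left _ hpos]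
  exact Nat.div_eq_of_lt_le (by linarith) (by linarith)

lemma revBits_modEq_of_div_eq {k s x y : ℕ} (h : x / 2 ^ s = y / 2 ^ s) :
    revBits k x ≡ revBits k y [MOD 2 ^ (k - s)] := by
  refine Nat.ModEq.sum fun i _ => ?_
  by_cases hi : i < k - s
  · have hdiv : ∀ z, z / 2 ^ (k - 1 - i) = z / 2 ^ s / 2 ^ (k - 1 - i - s) := fun z => by
      rw [Nat.div_div_eq_div_mul, ← pow_add, Nat.add_sub_cancel' (by omega)]
    rw [hdiv x, hdiv y, h]
  · have hdvd : ∀ b, 2 ^ (k - s) ∣ 2 ^ i * b := fun b =>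
      dvd_mul_of_dvd_left (pow_dvd_pow 2 (by omega)) b
    exact (Nat.modEq_zero_iff_dvd.mpr (hdvd _)).trans (Nat.modEq_zero_iff_dvd.mpr (hdvd _)).symm

lemma sInf_Y_of_eq_Ico {k e m : ℕ} {α : List ℕ} (hY : Y k α = Finset.Ico m (m + 2 ^ e)) :
    sInf {z : ℕ | z ∈ Y k α} = m := by
  change sInf (↑(Y k α) : Set ℕ) = m
  rw [hY, Finset.coe_Ico, csInf_Ico (by simp)]

lemma Y_cons_eq_Ico {k e m h : ℕ} {α : List ℕ} (hY : Y k α = Finset.Ico m (m + 2 ^ e))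
    (he : h ≤ e) : Y k (h :: α) = Finset.Ico (m + 2 ^ h / 2) (m + 2 ^ h) := by
  have hpow : 2 ^ h ≤ 2 ^ e := Nat.pow_le_pow_right two_pos he
  have hhalf : 2 ^ h / 2 < 2 ^ h := Nat.div_lt_self (by positivity) one_lt_two
  ext y
  rw [Y, sInf_Y_of_eq_Ico hY, Finset.mem_filter, clog_two_add_one_eq_iff, hY]
  simp only [Finset.mem_Ico]
  omega

lemma Y_cons_subset_Ico {k e m i l : ℕ} {α : List ℕ} (hY : Y k α = Finset.Ico m (m + 2 ^ e))
    (hi : i ≤ l) : Y k (i :: α) ⊆ Finset.Ico m (m + 2 ^ min l e) := by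
  intro y hy
  rw [Y, sInf_Y_of_eq_Ico hY, Finset.mem_filter, clog_two_add_one_eq_iff, hY,
    Finset.mem_Ico] at hy
  have hpow : 2 ^ i ≤ 2 ^ l := Nat.pow_le_pow_right two_pos hi
  rw [Finset.mem_Ico]
  rcases le_total l e with hle | hle
  · rw [min_eq_left hle]; omega
  · rw [min_eq_right hle]; omega

-- For `α = 0 :: _` the truncated `0 - 1 = 0` is right: `Y k α` is then a single point.
def blockExp (k : ℕ) : List ℕ → ℕ
  | [] => k
  | l :: _ => l - 1

lemma Y_eq_Ico_s13 (k : ℕ) {α : List ℕ} (hα : ValidSeq k α) :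
    ∃ m, 2 ^ blockExp k α ∣ m ∧ Y k α = Finset.Ico m (m + 2 ^ blockExp k α) := by
  induction α with
  | nil => exact ⟨0, dvd_zero _, by rw [zero_add, ← Finset.range_eq_Ico]; rfl⟩
  | cons h t ih =>
    obtain ⟨hsorted, hbound⟩ := hα
    obtain ⟨m, hdvd, hY⟩ :=
      ih ⟨hsorted.of_cons, fun l hl => hbound l (List.mem_cons_of_mem _ hl)⟩
    have he : h ≤ blockExp k t := by
      cases t with
      | nil => exact hbound h List.mem_cons_self
      | cons h' _ =>
        have := List.rel_of_pairwise_cons hsorted List.mem_cons_self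
        simp only [blockExp]; omega
    rcases h with _ | h
    · exact ⟨m, by simp [blockExp], by rw [Y_cons_eq_Ico hY he]; simp [blockExp]⟩
    · have hhalf : 2 ^ (h + 1) / 2 = 2 ^ h := by rw [pow_succ, Nat.mul_div_cancel _ two_pos]
      refine ⟨m + 2 ^ h, ?_, ?_⟩
      · exact dvd_add (dvd_trans (pow_dvd_pow 2 (by omega : h ≤ blockExp k t)) hdvd) dvd_rfl
      · rw [Y_cons_eq_Ico hY he, hhalf, blockExp, Nat.add_sub_cancel, pow_succ]
        congr 1; omega

/-- `minStep(⋃_{i=0}^{l} X^k_{α·(i)}) ≥ 2^{k−l}`: any two distinct elements of the union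
of the first `l+1` levels differ by at least `2^{k−l}`. -/
theorem minStep_union_ge (k : ℕ) (α : List ℕ) (l : ℕ) (h : ValidSeq k α) :
    ∀ x ∈ (Finset.range (l + 1)).biUnion (fun i => X k (i :: α)),
      ∀ y ∈ (Finset.range (l + 1)).biUnion (fun i => X k (i :: α)),
        x < y → 2 ^ (k - l) ≤ y - x := by
  obtain ⟨m, hdvd, hY⟩ := Y_eq_Ico_s13 k h
  have hcongr : ∀ z ∈ (Finset.range (l + 1)).biUnion (fun i => X k (i :: α)),
      z ≡ revBits k m [MOD 2 ^ (k - l)] := by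
    intro z hz
    simp only [Finset.mem_biUnion, Finset.mem_range, X, Finset.mem_image] at hz
    obtain ⟨i, hi, y, hy, rfl⟩ := hz
    have hm : 2 ^ min l (blockExp k α) ∣ m := dvd_trans (pow_dvd_pow 2 (min_le_right _ _)) hdvd
    exact (revBits_modEq_of_div_eq (div_eq_of_dvd_of_mem_Ico hm
      (Y_cons_subset_Ico hY (Nat.lt_succ_iff.mp hi) hy))).of_dvd
      (pow_dvd_pow 2 (by omega))
  intro x hx y hy hxy
  have hdvd_sub : 2 ^ (k - l) ∣ y - x :=
    (Nat.modEq_iff_dvd' hxy.le).mp ((hcongr x hx).trans (hcongr y hy).symm)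
  exact Nat.le_of_dvd (Nat.sub_pos_of_lt hxy) hdvd_sub
end
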